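/- Let R be a commutative ring, let k ≥ 1 and n, m, l ≥ 0 be natural numbers, and let u, v (each indexed 0,…,n), w, x (each indexed 0,…,m), and y, z (each indexed 0,…,l) be families of elements of R. Let f be the k × (2(n+k)+2(m+k)+2(l+k)) block matrix [H'(v) | −H'(u) | H'(x) | −H'(w) | H'(z) | −H'(y)] and let g be the (2(n+k)+2(m+k)+2(l+k)) × k block matrix whose vertical blocks are T(u), T(v), T(w), T(x), T(y), T(z) in that order. Then the product f·g is the k × k zero matrix. -/

import Mathlib

/-- The wide Hankel band matrix `H'(u)`: the `k × (n+k)` matrix with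
`H'(u)[i,j] = u (n+k-1-i-j)` when `k-1 ≤ i+j ≤ n+k-1` and `0` otherwise. -/
def Hw {R : Type*} [CommRing R] (k n : ℕ) (u : Fin (n + 1) → R) :
    Matrix (Fin k) (Fin (n + k)) R :=
  Matrix.of fun i j =>
    if h : k - 1 ≤ (i : ℕ) + (j : ℕ) ∧ (i : ℕ) + (j : ℕ) ≤ n + k - 1 then
      u ⟨n + k - 1 - (i : ℕ) - (j : ℕ), by omega⟩
    else 0

/-- The tall Toeplitz band matrix `T(u)`: the `(n+k) × k` matrix with
`T(u)[j,i] = u (j-i)` when `i ≤ j ≤ i + n` and `0` otherwise. -/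
def Tt {R : Type*} [CommRing R] (k n : ℕ) (u : Fin (n + 1) → R) :
    Matrix (Fin (n + k)) (Fin k) R :=
  Matrix.of fun j i =>
    if h : (i : ℕ) ≤ (j : ℕ) ∧ (j : ℕ) ≤ (i : ℕ) + n then
      u ⟨(j : ℕ) - (i : ℕ), by omega⟩
    else 0

/-!
Reading a family `a` as the polynomial `a(X) = ∑ aₚ Xᵖ`, the `(i, i')` entry of `H'(a) T(b)` is
the coefficient of `X^(n+k-1)` in `X^(i+i') a(X) b(X)`. This is symmetric in `a` and `b`, so
`H'(a) T(b) = H'(b) T(a)`, and `f g` is a sum of three differences of this form.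
-/

open Polynomial

section BandMatrices

variable {R : Type*} [CommRing R] (k n : ℕ) (a b : Fin (n + 1) → R)

theorem Hw_apply_eq_coeff [DecidableEq R] (i : Fin k) (j : Fin (n + k)) :
    Hw k n a i j = if k - 1 ≤ (i + j : ℕ) ∧ (i + j : ℕ) ≤ n + k - 1
      then (ofFn (n + 1) a).coeff (n + k - 1 - i - j) else 0 := by
  unfold Hw
  split_ifs with h
  · rw [Matrix.of_apply, dif_pos h, ofFn_coeff_eq_val_of_lt _ (by omega)]
  · rw [Matrix.of_apply, dif_neg h]

theorem Tt_apply_eq_coeff [DecidableEq R] (j : Fin (n + k)) (i : Fin k) :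
    Tt k n b j i = if (i : ℕ) ≤ j then (ofFn (n + 1) b).coeff (j - i) else 0 := by
  unfold Tt
  rw [Matrix.of_apply]
  by_cases h : (i : ℕ) ≤ j ∧ (j : ℕ) ≤ i + n
  · rw [dif_pos h, if_pos h.1, ofFn_coeff_eq_val_of_lt _ (by omega)]
  · rw [dif_neg h]
    split_ifs
    · rw [ofFn_coeff_eq_zero_of_ge _ (by omega)]
    · rfl

/-- The shift by `X ^ (i + i')`, rather than the coefficient index `n + k - 1 - i - i'`, makes
the entry vanish when `i + i' > n + k - 1`, where that index would truncate to `0`. -/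
theorem Hw_mul_Tt_apply [DecidableEq R] (i i' : Fin k) :
    (Hw k n a * Tt k n b) i i' =
      (X ^ (i + i' : ℕ) * ofFn (n + 1) a * ofFn (n + 1) b).coeff (n + k - 1) := by
  rw [mul_assoc, coeff_X_pow_mul', Matrix.mul_apply]
  simp only [Hw_apply_eq_coeff, Tt_apply_eq_coeff, ite_zero_mul_ite_zero, coeff_mul]
  split_ifs with hii'
  swap
  · exact Finset.sum_eq_zero fun j _ => if_neg (by omega)
  refine Finset.sum_bij_ne_zero (fun j _ _ => (n + k - 1 - i - j, (j : ℕ) - i')) ?_ ?_ ?_ ?_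
  · intro j _ hj
    have := (ite_ne_right_iff.mp hj).1
    rw [Finset.HasAntidiagonal.mem_antidiagonal]
    omega
  · intro j₁ _ hj₁ j₂ _ hj₂ h
    have := (ite_ne_right_iff.mp hj₁).1
    have := (ite_ne_right_iff.mp hj₂).1
    rw [Prod.mk.injEq] at h
    ext
    omega
  · rintro ⟨p, q⟩ hpq hne
    rw [Finset.HasAntidiagonal.mem_antidiagonal] at hpq
    have hp : p ≤ n := by
      by_contra h
      exact hne (by rw [ofFn_coeff_eq_zero_of_ge _ (by omega), zero_mul])
    refine ⟨⟨q + i', by omega⟩, Finset.mem_univ _, ?_, ?_⟩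
    · dsimp only
      rwa [if_pos (by omega), show n + k - 1 - i - (q + i') = p by omega, Nat.add_sub_cancel]
    · dsimp only
      rw [Prod.mk.injEq]
      omega
  · intro j _ hj
    rw [if_pos (ite_ne_right_iff.mp hj).1]

theorem Hw_mul_Tt_comm : Hw k n a * Tt k n b = Hw k n b * Tt k n a := by
  classical
  ext i i'
  rw [Hw_mul_Tt_apply, Hw_mul_Tt_apply, mul_assoc, mul_assoc, mul_comm (ofFn (n + 1) a)]

end BandMatrices

theorem stmt7_general {R : Type*} [CommRing R] (k n m l : ℕ)
    (u v : Fin (n + 1) → R) (w x : Fin (m + 1) → R) (y z : Fin (l + 1) → R) :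
    Matrix.fromCols (Matrix.fromCols (Hw k n v) (-(Hw k n u)))
        (Matrix.fromCols (Matrix.fromCols (Hw k m x) (-(Hw k m w)))
          (Matrix.fromCols (Hw k l z) (-(Hw k l y)))) *
      Matrix.fromRows (Matrix.fromRows (Tt k n u) (Tt k n v))
        (Matrix.fromRows (Matrix.fromRows (Tt k m w) (Tt k m x))
          (Matrix.fromRows (Tt k l y) (Tt k l z))) = 0 := by
  simp only [Matrix.fromCols_mul_fromRows, Matrix.neg_mul]
  rw [Hw_mul_Tt_comm k n v u, Hw_mul_Tt_comm k m x w, Hw_mul_Tt_comm k l z y]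
  abel

/-- The matrices `f = [H'(v) | -H'(u) | H'(x) | -H'(w) | H'(z) | -H'(y)]` and
`g = [T(u); T(v); T(w); T(x); T(y); T(z)]` of the monad on
`(ℙⁿ)² × (ℙᵐ)² × (ℙˡ)²` satisfy `f · g = 0`. -/
theorem stmt7 {R : Type*} [CommRing R] (k n m l : ℕ) (hk : 1 ≤ k)
    (u v : Fin (n + 1) → R) (w x : Fin (m + 1) → R) (y z : Fin (l + 1) → R) :
    Matrix.fromCols (Matrix.fromCols (Hw k n v) (-(Hw k n u)))
        (Matrix.fromCols (Matrix.fromCols (Hw k m x) (-(Hw k m w)))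
          (Matrix.fromCols (Hw k l z) (-(Hw k l y)))) *
      Matrix.fromRows (Matrix.fromRows (Tt k n u) (Tt k n v))
        (Matrix.fromRows (Matrix.fromRows (Tt k m w) (Tt k m x))
          (Matrix.fromRows (Tt k l y) (Tt k l z))) = 0 :=
  stmt7_general k n m l u v w x y z
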